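/- arXiv:1108.1303 — 6 statements merged into one kernel-verified Lean document; each statement's English description precedes it below -/
import Mathlib

section
/- Let G be a finite group and n ≥ 1 a natural number. Then d_n(G) = (1/|G|^{n+1}) · Σ_{x ∈ G} |C_G(x)|^n · d_{n-1}(C_G(x)), where C_G(x) denotes the centralizer of x in G. -/
/-! A commuting `(n+1)`-tuple is its head `x` together with a commuting `n`-tuple in
`C_G(x)`; counting by the head gives the recursion, and `d_{n-1}(C_G(x))` is that count
rescaled by `|C_G(x)|^n`. For `n = 0` the truncated `n - 1` is `0`, and `d_0 = 1`
agrees with the count of the single empty tuple. -/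

/-- The multiple commutativity degree `d_n(G)`: the number of `(n+1)`-tuples of
pairwise commuting elements of `G`, divided by `|G|^(n+1)`. -/
noncomputable def multCommDegree (G : Type*) [Group G] (n : ℕ) : ℚ :=
  (Nat.card {f : Fin (n + 1) → G // ∀ i j, Commute (f i) (f j)} : ℚ) /
    (Nat.card G : ℚ) ^ (n + 1)

abbrev CommTuple (G : Type*) [Group G] (n : ℕ) : Type _ :=
  {f : Fin n → G // ∀ i j, Commute (f i) (f j)}

section

variable {G : Type*} [Group G]

lemma multCommDegree_eq_card_commTuple_div (n : ℕ) :
    multCommDegree G n = (Nat.card (CommTuple G (n + 1)) : ℚ) / (Nat.card G : ℚ) ^ (n + 1) :=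
  rfl

lemma commute_cons_of_mem_centralizer {n : ℕ} {x : G} {g : Fin n → Subgroup.centralizer {x}}
    (hg : ∀ i j, Commute (g i) (g j)) (i j : Fin (n + 1)) :
    Commute ((Fin.cons x (fun k => (g k : G)) : Fin (n + 1) → G) i)
      ((Fin.cons x (fun k => (g k : G)) : Fin (n + 1) → G) j) := by
  have hx (k : Fin n) : Commute x (g k) :=
    (Subgroup.mem_centralizer_singleton_iff.1 (g k).2).symm
  cases i using Fin.cases <;> cases j using Fin.cases
  · exact Commute.refl x
  · exact hx _
  · exact (hx _).symm
  · exact congrArg Subtype.val (hg _ _)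

def commTupleSuccEquiv (G : Type*) [Group G] (n : ℕ) :
    CommTuple G (n + 1) ≃ Σ x : G, CommTuple (Subgroup.centralizer {x}) n where
  toFun f := ⟨f.1 0,
    fun i => ⟨f.1 i.succ, Subgroup.mem_centralizer_singleton_iff.2 (f.2 i.succ 0)⟩,
    fun i j => Subtype.ext (f.2 i.succ j.succ)⟩
  invFun p := ⟨Fin.cons p.1 (fun i => (p.2.1 i : G)), commute_cons_of_mem_centralizer p.2.2⟩
  left_inv f := Subtype.ext (Fin.cons_self_tail f.1)
  right_inv _ := rfl

lemma card_commTuple_succ [Fintype G] (n : ℕ) :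
    Nat.card (CommTuple G (n + 1)) = ∑ x : G, Nat.card (CommTuple (Subgroup.centralizer {x}) n) :=
  (Nat.card_congr (commTupleSuccEquiv G n)).trans Nat.card_sigma

lemma multCommDegree_zero [Finite G] : multCommDegree G 0 = 1 := by
  have hcard : Nat.card (CommTuple G 1) = Nat.card G :=
    Nat.card_congr ((Equiv.subtypeUnivEquiv fun _ i j => by
      rw [Subsingleton.elim i j]).trans (Equiv.funUnique (Fin 1) G))
  have hG : (Nat.card G : ℚ) ≠ 0 := by exact_mod_cast Nat.card_pos.ne'
  rw [multCommDegree_eq_card_commTuple_div, hcard, pow_one, div_self hG]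

lemma card_pow_mul_multCommDegree_pred [Finite G] (n : ℕ) :
    (Nat.card G : ℚ) ^ n * multCommDegree G (n - 1) = Nat.card (CommTuple G n) := by
  cases n with
  | zero => simp [multCommDegree_zero]
  | succ m =>
    have hG : (Nat.card G : ℚ) ≠ 0 := by exact_mod_cast Nat.card_pos.ne'
    rw [Nat.add_sub_cancel, multCommDegree_eq_card_commTuple_div,
      mul_div_cancel₀ _ (pow_ne_zero _ hG)]

end

theorem multCommDegree_eq_sum_centralizer_general (G : Type*) [Group G] [Fintype G]
    (n : ℕ) :
    multCommDegree G n =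
      (1 / (Nat.card G : ℚ) ^ (n + 1)) *
        ∑ x : G, (Nat.card (Subgroup.centralizer {x}) : ℚ) ^ n *
          multCommDegree (Subgroup.centralizer {x}) (n - 1) := by
  simp only [card_pow_mul_multCommDegree_pred]
  rw [multCommDegree_eq_card_commTuple_div, card_commTuple_succ, one_div_mul_eq_div]
  push_cast
  rfl

theorem multCommDegree_eq_sum_centralizer (G : Type*) [Group G] [Fintype G]
    (n : ℕ) (hn : 1 ≤ n) :
    multCommDegree G n =
      (1 / (Nat.card G : ℚ) ^ (n + 1)) *
        ∑ x : G, (Nat.card (Subgroup.centralizer {x}) : ℚ) ^ n *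
          multCommDegree (Subgroup.centralizer {x}) (n - 1) :=
  multCommDegree_eq_sum_centralizer_general G n
end

section
/- Let G be a finite group, let g_1, …, g_{k(G)} be a system of representatives for the conjugacy classes of G (where k(G) is the number of conjugacy classes), and let n be a natural number. Then d_{n+1}(G) = (1/|G|) · Σ_{i=1}^{k(G)} (1/|cl(g_i)|^n) · d_n(C_G(g_i)), where cl(g_i) denotes the conjugacy class of g_i in G. -/
/-! Splitting off the first entry `x` of a commuting `(n+2)`-tuple leaves a commuting
`(n+1)`-tuple in `C_G(x)`, so `|G|^(n+2) d_{n+1}(G) = ∑ₓ |C_G(x)|^(n+1) d_n(C_G(x))`. Conjugate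
elements have isomorphic centralizers, so the summand is constant on conjugacy classes, and
`|cl(x)| |C_G(x)| = |G|` turns the contribution of each class into the stated term. -/

open Subgroup

def CommutingTuples (G : Type*) [Mul G] (m : ℕ) : Type _ :=
  {f : Fin m → G // ∀ i j, Commute (f i) (f j)}

instance CommutingTuples.finite (G : Type*) [Mul G] [Finite G] (m : ℕ) :
    Finite (CommutingTuples G m) :=
  Subtype.finite

theorem multCommDegree_eq_card_commutingTuples (G : Type*) [Group G] (n : ℕ) :
    multCommDegree G n = (Nat.card (CommutingTuples G (n + 1)) : ℚ) / Nat.card G ^ (n + 1) :=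
  rfl

def CommutingTuples.congr {H K : Type*} [Mul H] [Mul K] (e : H ≃* K) (m : ℕ) :
    CommutingTuples H m ≃ CommutingTuples K m where
  toFun f := ⟨fun i => e (f.1 i), fun i j => (f.2 i j).map e⟩
  invFun f := ⟨fun i => e.symm (f.1 i), fun i j => (f.2 i j).map e.symm⟩
  left_inv _ := Subtype.ext <| funext fun _ => e.symm_apply_apply _
  right_inv _ := Subtype.ext <| funext fun _ => e.apply_symm_apply _

section

variable {G : Type*} [Group G]

theorem Subgroup.centralizer_conj (a x : G) :
    centralizer {a * x * a⁻¹} = (centralizer {x}).map (MulAut.conj a).toMonoidHom := by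
  ext b
  rw [mem_map_equiv, mem_centralizer_singleton_iff, mem_centralizer_singleton_iff]
  change Commute _ _ ↔ Commute _ _
  conv_rhs => rw [← Commute.conj_iff a]
  simp [mul_assoc]

def centralizerConjEquiv (a x : G) : centralizer {x} ≃* centralizer {a * x * a⁻¹} :=
  ((MulAut.conj a).subgroupMap _).trans (MulEquiv.subgroupCongr (centralizer_conj a x).symm)

theorem card_commutingTuples_centralizer_of_isConj {x y : G} (h : IsConj x y) (m : ℕ) :
    Nat.card (CommutingTuples (centralizer {x}) m) =
      Nat.card (CommutingTuples (centralizer {y}) m) := by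
  obtain ⟨a, rfl⟩ := isConj_iff.1 h
  exact Nat.card_congr (CommutingTuples.congr (centralizerConjEquiv a x) m)

theorem card_isConj_mul_card_centralizer (x : G) :
    Nat.card {y : G // IsConj x y} * Nat.card (centralizer {x}) = Nat.card G := by
  have e1 : {y : G // IsConj x y} ≃ MulAction.orbit (ConjAct G) x :=
    Equiv.subtypeEquivRight fun y => by rw [ConjAct.mem_orbit_conjAct, isConj_comm]
  have e2 : centralizer {x} ≃ MulAction.stabilizer (ConjAct G) x :=
    Equiv.subtypeEquiv ConjAct.toConjAct.toEquiv fun k => by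
      rw [centralizer_eq_comap_stabilizer]; exact Iff.rfl
  rw [Nat.card_congr e1, Nat.card_congr e2, ← Nat.card_prod,
    Nat.card_congr (MulAction.orbitProdStabilizerEquivGroup (ConjAct G) x),
    Nat.card_congr ConjAct.toConjAct.toEquiv.symm]

def commutingTuplesSuccEquiv (m : ℕ) :
    CommutingTuples G (m + 1) ≃ Σ x : G, CommutingTuples (centralizer {x}) m where
  toFun F := ⟨F.1 0, fun i => ⟨F.1 i.succ, mem_centralizer_singleton_iff.2 (F.2 i.succ 0)⟩,
    fun i j => Subtype.ext (F.2 _ _)⟩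
  invFun p := ⟨Fin.cons p.1 fun i => p.2.1 i, by
    have hc (i : Fin m) : Commute (p.2.1 i : G) p.1 :=
      mem_centralizer_singleton_iff.1 (p.2.1 i).2
    intro i j
    cases i using Fin.cases <;> cases j using Fin.cases
    · exact .refl _
    · exact (hc _).symm
    · exact hc _
    · exact congrArg Subtype.val (p.2.2 _ _)⟩
  left_inv F := Subtype.ext <| funext fun i => by cases i using Fin.cases <;> rfl
  right_inv p := rfl

theorem card_commutingTuples_succ [Fintype G] (m : ℕ) :
    Nat.card (CommutingTuples G (m + 1)) =
      ∑ x : G, Nat.card (CommutingTuples (centralizer {x}) m) := by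
  rw [Nat.card_congr (commutingTuplesSuccEquiv m), Nat.card_sigma]

theorem sum_eq_sum_card_isConj_smul [Fintype G] {ι M : Type*} [Fintype ι] [AddCommMonoid M]
    (f : G → M) (hf : ∀ x y, IsConj x y → f x = f y) (g : ι → G)
    (hg : Function.Bijective fun i => ConjClasses.mk (g i)) :
    ∑ x, f x = ∑ i, Nat.card {y : G // IsConj (g i) y} • f (g i) := by
  classical
  rw [← Finset.sum_fiberwise Finset.univ ConjClasses.mk f,
    ← (Equiv.ofBijective _ hg).sum_comp]
  refine Finset.sum_congr rfl fun i _ => ?_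
  have hclass : ∀ x, ConjClasses.mk x = ConjClasses.mk (g i) ↔ IsConj (g i) x := fun x => by
    rw [ConjClasses.mk_eq_mk_iff_isConj, isConj_comm]
  simp only [Equiv.ofBijective_apply, hclass]
  rw [Finset.sum_congr rfl fun x hx => (hf _ _ (Finset.mem_filter.1 hx).2).symm,
    Finset.sum_const, Nat.card_eq_fintype_card, Fintype.card_subtype]

theorem card_isConj_mul_card_commutingTuples_div [Finite G] (x : G) (n : ℕ) :
    ((Nat.card {y : G // IsConj x y} * Nat.card (CommutingTuples (centralizer {x}) (n + 1)) : ℕ)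
        : ℚ) / Nat.card G ^ (n + 2) =
      1 / Nat.card G * (1 / Nat.card {y : G // IsConj x y} ^ n *
        multCommDegree (centralizer {x}) n) := by
  have : Nonempty {y : G // IsConj x y} := ⟨⟨x, .refl x⟩⟩
  have hclass : (Nat.card {y : G // IsConj x y} : ℚ) ≠ 0 := by exact_mod_cast Nat.card_pos.ne'
  have hcent : (Nat.card (centralizer {x}) : ℚ) ≠ 0 := by exact_mod_cast Nat.card_pos.ne'
  rw [multCommDegree_eq_card_commutingTuples, ← card_isConj_mul_card_centralizer x]
  push_cast
  field_simp
  ring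

end

theorem multCommDegree_succ_eq_sum_over_conjClasses_general (G : Type*) [Group G] [Fintype G]
    (n : ℕ) (k : ℕ) (g : Fin k → G)
    (hg : Function.Bijective (fun i : Fin k => ConjClasses.mk (g i))) :
    multCommDegree G (n + 1) =
      (1 / (Nat.card G : ℚ)) *
        ∑ i : Fin k, (1 / (Nat.card {y : G // IsConj (g i) y} : ℚ) ^ n) *
          multCommDegree (Subgroup.centralizer {g i}) n := by
  have hconj (x y : G) (h : IsConj x y) := card_commutingTuples_centralizer_of_isConj h (n + 1)
  rw [multCommDegree_eq_card_commutingTuples, card_commutingTuples_succ,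
    sum_eq_sum_card_isConj_smul _ hconj g hg, Nat.cast_sum, Finset.sum_div, Finset.mul_sum]
  exact Finset.sum_congr rfl fun i _ => card_isConj_mul_card_commutingTuples_div (g i) n

theorem multCommDegree_succ_eq_sum_over_conjClasses (G : Type*) [Group G] [Fintype G]
    (n : ℕ) (k : ℕ) (hk : k = Nat.card (ConjClasses G)) (g : Fin k → G)
    (hg : Function.Bijective (fun i : Fin k => ConjClasses.mk (g i))) :
    multCommDegree G (n + 1) =
      (1 / (Nat.card G : ℚ)) *
        ∑ i : Fin k, (1 / (Nat.card {y : G // IsConj (g i) y} : ℚ) ^ n) *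
          multCommDegree (Subgroup.centralizer {g i}) n :=
  multCommDegree_succ_eq_sum_over_conjClasses_general G n k g hg
end

section
/- Let G be a finite group, let N be a normal subgroup of G, and let n be a natural number. Then d_n(G) ≤ d_n(G/N). -/
/-! Writing `G ≃ (G ⧸ N) × N`, a commuting tuple in `G` is determined by its image in `G ⧸ N`,
which is again a commuting tuple, together with a tuple in `N`. Hence the number of commuting
`k`-tuples in `G` is at most that in `G ⧸ N` times `|N|^k`; divide by `|G|^k = |G ⧸ N|^k |N|^k`. -/

open Subgroup

theorem card_commuting_tuples_le_quotient {G ι : Type*} [Group G] [Finite G] [Finite ι]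
    (N : Subgroup G) [N.Normal] :
    Nat.card {f : ι → G // ∀ i j, Commute (f i) (f j)} ≤
      Nat.card {f : ι → G ⧸ N // ∀ i j, Commute (f i) (f j)} * Nat.card N ^ Nat.card ι := by
  let π : G →* G ⧸ N := QuotientGroup.mk' N
  let split : {f : ι → G // ∀ i j, Commute (f i) (f j)} →
      {f : ι → G ⧸ N // ∀ i j, Commute (f i) (f j)} × (ι → N) :=
    fun f => (⟨π ∘ f.1, fun i j => (f.2 i j).map π⟩,
      fun i => (groupEquivQuotientProdSubgroup (f.1 i)).2)
  have split_injective : Function.Injective split := by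
    rintro f g hfg
    simp only [split, Prod.mk.injEq, Subtype.mk.injEq] at hfg
    obtain ⟨himage, hkernel⟩ := hfg
    ext i
    apply groupEquivQuotientProdSubgroup.injective
    -- the first component of `groupEquivQuotientProdSubgroup` is the quotient map, definitionally
    exact Prod.ext (congrFun himage i) (congrFun hkernel i)
  simpa only [Nat.card_prod, Nat.card_fun] using Nat.card_le_card_of_injective split split_injective

theorem multCommDegree_le_quotient (G : Type*) [Group G] [Finite G]
    (N : Subgroup G) [N.Normal] (n : ℕ) :
    multCommDegree G n ≤ multCommDegree (G ⧸ N) n := by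
  have hQ : (0 : ℚ) < Nat.card (G ⧸ N) := by exact_mod_cast Nat.card_pos
  have hN : (0 : ℚ) < Nat.card N := by exact_mod_cast Nat.card_pos
  have hcard := card_commuting_tuples_le_quotient (ι := Fin (n + 1)) N
  rw [Nat.card_fin] at hcard
  unfold multCommDegree
  rw [card_eq_card_quotient_mul_card_subgroup N, Nat.cast_mul, mul_pow, mul_comm, ← div_div,
    div_le_div_iff_of_pos_right (by positivity), div_le_iff₀ (by positivity)]
  exact_mod_cast hcard
end

section
/- Let G be a finite group, let N be a normal subgroup of G with N ∩ [G,G] = 1 (the intersection of N with the commutator subgroup of G is trivial), and let n be a natural number. Then d_n(G) = d_n(G/N). -/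
/-! Since `N ∩ [G,G] = 1`, two elements of `G` commute exactly when their images in `G/N` do:
their commutator lies in `[G,G]`, so it is trivial as soon as it lies in `N`. Hence the
commuting tuples of `G` are the full preimage of those of `G/N`, every fibre of `G^ι → (G/N)^ι`
has `|N|^|ι|` elements, and this factor cancels against `|G|^|ι| = |G/N|^|ι| |N|^|ι|`. -/

section

open scoped commutatorElement

variable {G : Type*} [Group G]

theorem MonoidHom.commute_map_iff_of_ker_inf_commutator_eq_bot {H : Type*} [Group H]
    {φ : G →* H} (hφ : φ.ker ⊓ commutator G = ⊥) {x y : G} :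
    Commute (φ x) (φ y) ↔ Commute x y := by
  refine ⟨fun h => ?_, fun h => h.map φ⟩
  have hmem : ⁅x, y⁆ ∈ φ.ker ⊓ commutator G := Subgroup.mem_inf.2
    ⟨by rwa [mem_ker, map_commutatorElement, commutatorElement_eq_one_iff_commute],
      Subgroup.commutator_mem_commutator (Subgroup.mem_top x) (Subgroup.mem_top y)⟩
  rwa [hφ, Subgroup.mem_bot, commutatorElement_eq_one_iff_commute] at hmem

namespace QuotientGroup

theorem card_subtype_comp_mk {ι : Type*} [Finite ι] (N : Subgroup G)
    (p : (ι → G ⧸ N) → Prop) :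
    Nat.card {f : ι → G // p fun i => (f i : G ⧸ N)} =
      Nat.card N ^ Nat.card ι * Nat.card {g // p g} := by
  let e : (ι → G) ≃ (ι → G ⧸ N) × (ι → N) :=
    (Equiv.arrowCongr (.refl ι) Subgroup.groupEquivQuotientProdSubgroup).trans
      (Equiv.arrowProdEquivProdArrow _ _ _)
  have he : ∀ f, p (fun i => (f i : G ⧸ N)) ↔ p (e f).1 := fun _ => Iff.rfl
  rw [Nat.card_congr ((e.subtypeEquiv he).trans Equiv.prodSubtypeFstEquivSubtypeProd),
    Nat.card_prod, Nat.card_fun, mul_comm]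

theorem card_commuting_tuples_of_inf_commutator_eq_bot {ι : Type*} [Finite ι]
    {N : Subgroup G} [N.Normal] (hN : N ⊓ commutator G = ⊥) :
    Nat.card {f : ι → G // ∀ i j, Commute (f i) (f j)} =
      Nat.card N ^ Nat.card ι * Nat.card {g : ι → G ⧸ N // ∀ i j, Commute (g i) (g j)} := by
  have hcomm (x y : G) : Commute (x : G ⧸ N) y ↔ Commute x y :=
    (ker_mk' N ▸ MonoidHom.commute_map_iff_of_ker_inf_commutator_eq_bot) hN
  rw [← card_subtype_comp_mk N fun g => ∀ i j, Commute (g i) (g j)]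
  simp only [hcomm]

end QuotientGroup

end

theorem multCommDegree_eq_quotient_of_inf_commutator_eq_bot (G : Type*) [Group G] [Finite G]
    (N : Subgroup G) [N.Normal] (hN : N ⊓ commutator G = ⊥) (n : ℕ) :
    multCommDegree G n = multCommDegree (G ⧸ N) n := by
  have hN_pos : (0 : ℚ) < Nat.card N ^ (n + 1) := by
    have := Nat.card_pos (α := N)
    positivity
  rw [multCommDegree, multCommDegree,
    QuotientGroup.card_commuting_tuples_of_inf_commutator_eq_bot hN,
    Subgroup.card_eq_card_quotient_mul_card_subgroup N, Nat.card_fin]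
  push_cast
  rw [mul_pow, mul_comm _ ((Nat.card N : ℚ) ^ (n + 1)), mul_div_mul_left _ _ hN_pos.ne']
end

section
/- Let G be a finite non-abelian group of even order and let n ≥ 1 be a natural number. Then d_n(G) ≤ (3·2^n − 1)/2^{2n+1}. -/
open Finset Subgroup

theorem le_of_succ_le_mul_add {K : Type*} [Field K] [LinearOrder K] [IsStrictOrderedRing K]
    {d : ℕ → K} {z : K} (hz₀ : 0 ≤ z) (hz : z ≤ 1 / 4) (hd₀ : d 0 ≤ 1)
    (hd : ∀ n, d (n + 1) ≤ z * d n + (1 - z) / 2 ^ (n + 1)) (n : ℕ) :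
    d n ≤ (3 * 2 ^ n - 1) / 2 ^ (2 * n + 1) := by
  induction n with
  | zero => norm_num [hd₀]
  | succ n ih =>
    set t : K := 2 ^ n
    have ht : 1 ≤ t := one_le_pow₀ one_le_two
    have e₁ : (2 : K) ^ (n + 1) = 2 * t := by rw [pow_succ, mul_comm]
    have e₂ : (2 : K) ^ (2 * n + 1) = 2 * t ^ 2 := by rw [pow_succ, pow_mul', mul_comm]
    have e₃ : (2 : K) ^ (2 * (n + 1) + 1) = 8 * t ^ 2 := by
      rw [show 2 * (n + 1) + 1 = 2 * n + 1 + 2 by ring, pow_add, e₂]; ring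
    rw [e₂] at ih
    have hgap : d n - 1 / (2 * t) ≤ (2 * t - 1) / (2 * t ^ 2) := by
      have : (3 * t - 1) / (2 * t ^ 2) - 1 / (2 * t) = (2 * t - 1) / (2 * t ^ 2) := by
        field_simp; ring
      linarith
    have hstep : z * (d n - 1 / (2 * t)) ≤ 1 / 4 * ((2 * t - 1) / (2 * t ^ 2)) :=
      calc z * (d n - 1 / (2 * t)) ≤ z * ((2 * t - 1) / (2 * t ^ 2)) := by gcongr
        _ ≤ 1 / 4 * ((2 * t - 1) / (2 * t ^ 2)) :=
          mul_le_mul_of_nonneg_right hz (div_nonneg (by linarith) (by positivity))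
    calc d (n + 1) ≤ z * d n + (1 - z) / (2 * t) := e₁ ▸ hd n
      _ = 1 / (2 * t) + z * (d n - 1 / (2 * t)) := by ring
      _ ≤ 1 / (2 * t) + 1 / 4 * ((2 * t - 1) / (2 * t ^ 2)) := by linarith
      _ = (3 * 2 ^ (n + 1) - 1) / 2 ^ (2 * (n + 1) + 1) := by
          rw [e₁, e₃]; field_simp; ring

def commutingTuples (G : Type*) [Mul G] (n : ℕ) : Set (Fin n → G) :=
  {f | ∀ i j, Commute (f i) (f j)}

section Mul

variable {G : Type*} [Mul G]

theorem cons_mem_commutingTuples_iff {n : ℕ} {x : G} {g : Fin n → G} :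
    Fin.cons x g ∈ commutingTuples G (n + 1) ↔
      g ∈ commutingTuples G n ∧ ∀ i, Commute (g i) x := by
  simp only [commutingTuples, Set.mem_ofPred_eq, Fin.forall_fin_succ, Fin.cons_zero,
    Fin.cons_succ, Commute.refl, true_and]
  exact ⟨fun h => ⟨fun i => (h.2 i).2, fun i => (h.2 i).1⟩,
    fun h => ⟨fun i => (h.2 i).symm, fun i => ⟨h.2 i, h.1 i⟩⟩⟩

theorem card_commutingTuples_le [Finite G] (n : ℕ) :
    Nat.card (commutingTuples G n) ≤ Nat.card G ^ n :=
  (Finite.card_subtype_le (· ∈ commutingTuples G n)).trans_eq (by simp [Nat.card_fun])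

theorem card_commutingTuples_succ_s6 [Fintype G] (n : ℕ) :
    Nat.card (commutingTuples G (n + 1)) =
      ∑ x : G, Nat.card {g ∈ commutingTuples G n | ∀ i, Commute (g i) x} := by
  let P (x : G) (g : Fin n → G) : Prop := Fin.cons x g ∈ commutingTuples G (n + 1)
  let e : commutingTuples G (n + 1) ≃ Σ x, {g // P x g} :=
    (Equiv.subtypeEquiv (Fin.consEquiv fun _ => G) fun _ => Iff.rfl).symm.trans
      (Equiv.subtypeProdEquivSigmaSubtype P)
  rw [Nat.card_congr e, Nat.card_sigma]
  exact sum_congr rfl fun x _ => congrArg (fun s : Set (Fin n → G) => Nat.card s)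
    (Set.ext fun _ => cons_mem_commutingTuples_iff)

end Mul

section Group

variable {G : Type*} [Group G]

theorem not_prime_index_center : ¬ (center G).index.Prime := by
  intro hp
  have : IsCyclic (G ⧸ center G) :=
    isCyclic_of_prime_card (p := (center G).index) (hp := ⟨hp⟩) rfl
  have : IsMulCommutative G := isMulCommutative_of_isCyclic_quotient_center_self G
  exact hp.one_lt.ne' (index_eq_one.mpr (center_eq_top_iff.mpr inferInstance))

theorem four_le_index_center [Finite G] (hG : ¬ IsMulCommutative G) :
    4 ≤ (center G).index := by
  have h₀ : (center G).index ≠ 0 := index_ne_zero_of_finite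
  have h₁ : (center G).index ≠ 1 := fun h => hG (center_eq_top_iff.mp (index_eq_one.mp h))
  have h₂ : (center G).index ≠ 2 := fun h => not_prime_index_center (h ▸ Nat.prime_two)
  have h₃ : (center G).index ≠ 3 := fun h => not_prime_index_center (h ▸ Nat.prime_three)
  omega

theorem two_mul_card_centralizer_le [Finite G] {x : G} (hx : x ∉ center G) :
    2 * Nat.card (centralizer {x}) ≤ Nat.card G := by
  have hne : centralizer {x} ≠ ⊤ := fun h => hx (centralizer_eq_top_iff_subset.mp h rfl)
  rw [← card_mul_index (centralizer {x}), mul_comm]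
  exact Nat.mul_le_mul_left _ (one_lt_index_of_ne_top hne)

theorem sep_commute_eq_of_mem_center {x : G} (hx : x ∈ center G) (n : ℕ) :
    {g ∈ commutingTuples G n | ∀ i, Commute (g i) x} = commutingTuples G n :=
  Set.sep_eq_self_iff_mem_true.mpr fun g _ i => mem_center_iff.mp hx (g i)

theorem card_sep_commute_le_of_notMem_center [Finite G] {x : G} (hx : x ∉ center G) (n : ℕ) :
    (Nat.card {g ∈ commutingTuples G n | ∀ i, Commute (g i) x} : ℚ) ≤ (Nat.card G / 2) ^ n := by
  have hinj : Nat.card {g ∈ commutingTuples G n | ∀ i, Commute (g i) x} ≤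
      Nat.card (Fin n → centralizer {x}) :=
    Nat.card_le_card_of_injective
      (fun g i => ⟨g.1 i, mem_centralizer_singleton_iff.mpr (g.2.2 i)⟩)
      fun g h hgh => Subtype.ext (funext fun i => congrArg Subtype.val (congrFun hgh i))
  have hC : (2 * Nat.card (centralizer {x}) : ℚ) ≤ Nat.card G := by
    exact_mod_cast two_mul_card_centralizer_le hx
  calc (Nat.card {g ∈ commutingTuples G n | ∀ i, Commute (g i) x} : ℚ)
      ≤ (Nat.card (centralizer {x}) : ℚ) ^ n := by
        simpa [Nat.card_fun] using (Nat.cast_le (α := ℚ)).mpr hinj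
    _ ≤ (Nat.card G / 2) ^ n := by gcongr; linarith

theorem card_commutingTuples_succ_le [Finite G] (n : ℕ) :
    (Nat.card (commutingTuples G (n + 1)) : ℚ) ≤
      Nat.card (center G) * Nat.card (commutingTuples G n) +
        (Nat.card G - Nat.card (center G)) * (Nat.card G / 2) ^ n := by
  classical
  cases nonempty_fintype G
  have hsplit : ((univ.filter (· ∈ center G)).card : ℚ) + (univ.filter (· ∉ center G)).card =
      Nat.card G := by
    exact_mod_cast (card_filter_add_card_filter_not _).trans Nat.card_eq_fintype_card.symm
  have hZ : (univ.filter (· ∈ center G)).card = Nat.card (center G) := by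
    rw [Nat.card_eq_fintype_card, Fintype.card_subtype]
  rw [card_commutingTuples_succ_s6, Nat.cast_sum]
  calc ∑ x : G, (Nat.card {g ∈ commutingTuples G n | ∀ i, Commute (g i) x} : ℚ)
      ≤ ∑ x : G, if x ∈ center G then (Nat.card (commutingTuples G n) : ℚ)
          else (Nat.card G / 2) ^ n := by
        gcongr with x
        split_ifs with hx
        · rw [sep_commute_eq_of_mem_center hx]
        · exact card_sep_commute_le_of_notMem_center hx n
    _ = _ := by
        rw [sum_ite, sum_const, sum_const, nsmul_eq_mul, nsmul_eq_mul, ← hZ]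
        linear_combination (Nat.card G / 2 : ℚ) ^ n * hsplit

theorem multCommDegree_eq (n : ℕ) :
    multCommDegree G n = Nat.card (commutingTuples G (n + 1)) / (Nat.card G : ℚ) ^ (n + 1) :=
  rfl

theorem multCommDegree_le_one [Finite G] (n : ℕ) : multCommDegree G n ≤ 1 := by
  rw [multCommDegree_eq]
  exact div_le_one_of_le₀ (by exact_mod_cast card_commutingTuples_le (n + 1)) (by positivity)

theorem multCommDegree_succ_le [Finite G] (n : ℕ) :
    multCommDegree G (n + 1) ≤
      Nat.card (center G) / Nat.card G * multCommDegree G n +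
        (1 - Nat.card (center G) / Nat.card G) / 2 ^ (n + 1) := by
  have hG : (0 : ℚ) < Nat.card G := by exact_mod_cast Nat.card_pos
  rw [multCommDegree_eq, multCommDegree_eq, div_le_iff₀ (by positivity)]
  refine (card_commutingTuples_succ_le (n + 1)).trans_eq ?_
  rw [div_pow]
  field_simp
  ring

theorem card_center_div_card_le [Finite G] (hG : ¬ IsMulCommutative G) :
    (Nat.card (center G) : ℚ) / Nat.card G ≤ 1 / 4 := by
  have hpos : (0 : ℚ) < Nat.card G := by exact_mod_cast Nat.card_pos
  have h₄ : (4 * Nat.card (center G) : ℚ) ≤ Nat.card G := by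
    rw [← card_mul_index (center G), mul_comm 4]
    exact_mod_cast Nat.mul_le_mul_left _ (four_le_index_center hG)
  rw [div_le_iff₀ hpos]
  linarith

end Group

theorem multCommDegree_le_of_even_order_general (G : Type*) [Group G] [Finite G]
    (hna : ¬ ∀ a b : G, a * b = b * a)
    (n : ℕ) :
    multCommDegree G n ≤ (3 * 2 ^ n - 1 : ℚ) / 2 ^ (2 * n + 1) :=
  le_of_succ_le_mul_add (by positivity) (card_center_div_card_le fun h => hna h.is_comm.comm)
    (multCommDegree_le_one 0) multCommDegree_succ_le n

theorem multCommDegree_le_of_even_order (G : Type*) [Group G] [Finite G]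
    (hna : ¬ ∀ a b : G, a * b = b * a) (heven : 2 ∣ Nat.card G)
    (n : ℕ) (hn : 1 ≤ n) :
    multCommDegree G n ≤ (3 * 2 ^ n - 1 : ℚ) / 2 ^ (2 * n + 1) :=
  multCommDegree_le_of_even_order_general G hna n
end

section
/- Let n ≥ 3 be an odd natural number and let D_{2n} denote the dihedral group of order 2n. Then for every natural number m ≥ 1, d_m(D_{2n}) = (n^m + 2^{m+1} − 1)/(2·(2n)^m). -/
/-! For odd `n`, the centralizer of a nontrivial element of `DihedralGroup n` is either the
rotation subgroup or `{1, sr k}`, and these `n + 1` abelian subgroups cover the group and meet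
pairwise in `1`. So every nontrivial commuting tuple has all its entries in exactly one of them,
and there are `1 + (n ^ (m + 1) - 1) + n * (2 ^ (m + 1) - 1)` commuting `(m + 1)`-tuples. -/

open Finset

section CommutingTuples

variable {G ι α : Type*} [Group G] [DecidableEq G] [Fintype ι] [Fintype α]
  [DecidableEq α] {A : ι → Finset G}

theorem setOf_commuting_eq_insert_one_biUnion
    (hcomm : ∀ j, ∀ x ∈ A j, ∀ y ∈ A j, Commute x y)
    (hcent : ∀ j, ∀ x ∈ A j, x ≠ 1 → ∀ y, Commute x y → y ∈ A j)
    (hpart : ∀ x : G, x ≠ 1 → ∃! j, x ∈ A j) :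
    {f : α → G | ∀ i i', Commute (f i) (f i')} =
      ↑(insert 1 (univ.biUnion fun j => Fintype.piFinset (fun _ => A j) \ {1}) :
        Finset (α → G)) := by
  ext f
  simp only [Set.mem_ofPred_eq, coe_insert, Set.mem_insert_iff, mem_coe, mem_biUnion, mem_univ,
    true_and, mem_sdiff, Fintype.mem_piFinset, mem_singleton]
  constructor
  · intro hf
    by_cases hf1 : f = 1
    · exact Or.inl hf1
    obtain ⟨i₀, hi₀⟩ : ∃ i, f i ≠ 1 := by
      by_contra! h
      exact hf1 (funext h)
    obtain ⟨j, hj, -⟩ := hpart _ hi₀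
    exact Or.inr ⟨j, fun i => hcent j _ hj hi₀ _ (hf i₀ i), hf1⟩
  · rintro (rfl | ⟨j, hj, -⟩) i i'
    · exact Commute.one_left 1
    · exact hcomm j _ (hj i) _ (hj i')

theorem card_commuting_tuples_of_partition (hone : ∀ j, 1 ∈ A j)
    (hcomm : ∀ j, ∀ x ∈ A j, ∀ y ∈ A j, Commute x y)
    (hcent : ∀ j, ∀ x ∈ A j, x ≠ 1 → ∀ y, Commute x y → y ∈ A j)
    (hpart : ∀ x : G, x ≠ 1 → ∃! j, x ∈ A j) :
    Nat.card {f : α → G // ∀ i i', Commute (f i) (f i')} =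
      1 + ∑ j, (#(A j) ^ Fintype.card α - 1) := by
  have hdisj : ((univ : Finset ι) : Set ι).PairwiseDisjoint
      fun j => Fintype.piFinset (fun _ : α => A j) \ {1} := by
    intro j _ k _ hjk
    refine disjoint_left.mpr fun f hfj hfk => hjk ?_
    simp only [mem_sdiff, Fintype.mem_piFinset, mem_singleton] at hfj hfk
    obtain ⟨i, hi⟩ : ∃ i, f i ≠ 1 := by
      by_contra! h
      exact hfj.2 (funext h)
    exact (hpart _ hi).unique (hfj.1 i) (hfk.1 i)
  rw [← Set.coe_ofPred, setOf_commuting_eq_insert_one_biUnion hcomm hcent hpart,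
    Nat.card_coe_set_eq, Set.ncard_coe_finset, card_insert_of_notMem (by simp),
    card_biUnion hdisj, add_comm]
  congr 1
  refine sum_congr rfl fun j _ => ?_
  rw [card_sdiff_of_subset (by simpa using fun _ => hone j)]
  simp

end CommutingTuples

namespace DihedralGroup

variable {n : ℕ}

theorem commute_r_sr_iff (hodd : Odd n) {i j : ZMod n} : Commute (r i) (sr j) ↔ i = 0 := by
  rw [Commute, SemiconjBy, r_mul_sr, sr_mul_r, sr.injEq, sub_eq_add_neg, add_right_inj,
    neg_eq_iff_add_eq_zero, ZMod.add_self_eq_zero_iff_eq_zero hodd]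

theorem commute_sr_sr_iff (hodd : Odd n) {i j : ZMod n} : Commute (sr i) (sr j) ↔ i = j := by
  rw [Commute, SemiconjBy, sr_mul_sr, sr_mul_sr, r.injEq, ← neg_sub, neg_eq_iff_add_eq_zero,
    ZMod.add_self_eq_zero_iff_eq_zero hodd, sub_eq_zero]

variable [NeZero n]

-- Maximal abelian only for odd `n`: for even `n` the rotation `r (n / 2)` is central.
def maxAbelian : Option (ZMod n) → Finset (DihedralGroup n)
  | none => univ.image r
  | some k => {1, sr k}

theorem one_mem_maxAbelian (j : Option (ZMod n)) : 1 ∈ maxAbelian j := by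
  cases j <;> simp [maxAbelian, ← r_zero]

theorem commute_of_mem_maxAbelian (j : Option (ZMod n)) :
    ∀ x ∈ maxAbelian j, ∀ y ∈ maxAbelian j, Commute x y := by
  cases j with
  | none =>
    simp only [maxAbelian, mem_image, mem_univ, true_and, forall_exists_index,
      forall_apply_eq_imp_iff]
    intro a b
    rw [Commute, SemiconjBy, r_mul_r, r_mul_r, add_comm]
  | some k =>
    simp only [maxAbelian, mem_insert, mem_singleton]
    rintro x (rfl | rfl) y (rfl | rfl) <;> simp [Commute.refl]

theorem mem_maxAbelian_of_commute (hodd : Odd n) (j : Option (ZMod n)) :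
    ∀ x ∈ maxAbelian j, x ≠ 1 → ∀ y, Commute x y → y ∈ maxAbelian j := by
  cases j with
  | none =>
    simp only [maxAbelian, mem_image, mem_univ, true_and, forall_exists_index,
      forall_apply_eq_imp_iff]
    rintro a ha (b | b) hab
    · exact ⟨b, rfl⟩
    · exact (ha (by rw [(commute_r_sr_iff hodd).mp hab, r_zero])).elim
  | some k =>
    simp only [maxAbelian, mem_insert, mem_singleton]
    rintro x (rfl | rfl) hx (b | b) hxy
    · exact (hx rfl).elim
    · exact (hx rfl).elim
    · rw [(commute_r_sr_iff hodd).mp hxy.symm, r_zero]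
      exact Or.inl rfl
    · exact Or.inr (by rw [(commute_sr_sr_iff hodd).mp hxy])

theorem existsUnique_mem_maxAbelian (x : DihedralGroup n) (hx : x ≠ 1) :
    ∃! j, x ∈ maxAbelian j := by
  cases x with
  | r a =>
    refine ⟨none, by simp [maxAbelian], fun j hj => ?_⟩
    cases j <;> simp_all [maxAbelian]
  | sr a =>
    refine ⟨some a, by simp [maxAbelian], fun j hj => ?_⟩
    cases j <;> simp_all [maxAbelian, one_def, -r_zero]

theorem card_maxAbelian_none : #(maxAbelian (none : Option (ZMod n))) = n := by
  rw [maxAbelian, card_image_of_injective _ fun _ _ h => r.inj h, card_univ, ZMod.card]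

theorem card_maxAbelian_some (k : ZMod n) : #(maxAbelian (some k)) = 2 :=
  card_pair (by simp [one_def, -r_zero])

theorem card_commuting_tuples (hodd : Odd n) (α : Type*) [Fintype α] [DecidableEq α] :
    Nat.card {f : α → DihedralGroup n // ∀ i i', Commute (f i) (f i')} =
      1 + (n ^ Fintype.card α - 1) + n * (2 ^ Fintype.card α - 1) := by
  rw [card_commuting_tuples_of_partition one_mem_maxAbelian commute_of_mem_maxAbelian
    (mem_maxAbelian_of_commute hodd) existsUnique_mem_maxAbelian, Fintype.sum_option,
    card_maxAbelian_none]
  simp [card_maxAbelian_some, add_assoc]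

end DihedralGroup

theorem multCommDegree_dihedralGroup_general (n : ℕ) (hodd : Odd n) (m : ℕ) :
    multCommDegree (DihedralGroup n) m =
      ((n : ℚ) ^ m + 2 ^ (m + 1) - 1) / (2 * (2 * (n : ℚ)) ^ m) := by
  have : NeZero n := ⟨hodd.pos.ne'⟩
  rw [multCommDegree, DihedralGroup.card_commuting_tuples hodd, Fintype.card_fin,
    DihedralGroup.nat_card]
  have hn : (n : ℚ) ≠ 0 := by exact_mod_cast hodd.pos.ne'
  push_cast [Nat.one_le_pow _ _ hodd.pos, Nat.one_le_two_pow]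
  field_simp
  ring

theorem multCommDegree_dihedralGroup (n : ℕ) (hn : 3 ≤ n) (hodd : Odd n)
    (m : ℕ) (hm : 1 ≤ m) :
    multCommDegree (DihedralGroup n) m =
      ((n : ℚ) ^ m + 2 ^ (m + 1) - 1) / (2 * (2 * (n : ℚ)) ^ m) :=
  multCommDegree_dihedralGroup_general n hodd m
end
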